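/- arXiv:2008.02099 — 5 statements merged into one kernel-verified Lean document; each statement's English description precedes it below -/
import Mathlib

section
/- Tasks in the same class are equivalent: for any two 2-process affine tasks A on n = 3^ℓ and B on m = 3^{ℓ'} (ℓ, ℓ' ≥ 1) with class(A) = class(B), the affine model B* solves A; i.e., there exist k ≥ 1 and a chromatic carrier-preserving simplicial map δ from B^{⋆k} (a task on {0,…,m^k}) to the subdivided 1-simplex on {0,…,n} such that δ(B^{⋆k}) ⊆ A. -/
/-!
2-process affine tasks, modeled combinatorially.
The ℓ-th iterated standard chromatic subdivision of the 1-simplex is the path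
graph on vertices `{0, …, n}`, `n = 3^ℓ`, whose edges are the pairs `{i, i+1}`
for `0 ≤ i < n`; vertex `i` has color `i % 2`, vertex `0` is the solo vertex of
process `p₀` and vertex `n` the solo vertex of `p₁`.  An edge `{i, i+1}` is
encoded by its left endpoint `i`, and a 2-process affine task on `n` is a
nonempty finite set `A : Finset ℕ` of such edges (left endpoints `< n`).
-/

/-- `StepRel A x y`: the vertices `x` and `y` are joined by an edge of `A`
(the edge `{i, i+1}` being encoded by its left endpoint `i`). -/
def StepRel (A : Finset ℕ) (x y : ℕ) : Prop :=
  (y = x + 1 ∧ x ∈ A) ∨ (x = y + 1 ∧ y ∈ A)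

/-- `P₁(A)`: the vertices `0` and `n` are joined by a path all of whose edges
lie in `A`. -/
def P1 (n : ℕ) (A : Finset ℕ) : Prop := Relation.ReflTransGen (StepRel A) 0 n

/-- `P₂(A)`: the edge `{0, 1}` belongs to `A`. -/
def P2 (A : Finset ℕ) : Prop := 0 ∈ A

/-- `P₃(A)`: the edge `{n-1, n}` belongs to `A`. -/
def P3 (n : ℕ) (A : Finset ℕ) : Prop := n - 1 ∈ A

open Classical in
/-- The class of a 2-process affine task `A` on `{0,…,n}`:
`1` if `P₁(A)`; `2` if `¬P₁ ∧ P₂ ∧ P₃`; `3` if `¬P₁ ∧ P₂ ∧ ¬P₃`;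
`4` if `¬P₁ ∧ ¬P₂ ∧ P₃`; `5` if `¬P₁ ∧ ¬P₂ ∧ ¬P₃`. -/
noncomputable def classOf (n : ℕ) (A : Finset ℕ) : ℕ :=
  if P1 n A then 1
  else if P2 A then (if P3 n A then 2 else 3)
  else (if P3 n A then 4 else 5)

/-- The class order `⊑` on `{1, …, 5}`: `c ⊑ c'` iff `c = c'`, or `c = 1`,
or `c' = 5`, or (`c = 2` and `c' ∈ {3, 4}`). -/
def ClassLE (c c' : ℕ) : Prop :=
  c = c' ∨ c = 1 ∨ c' = 5 ∨ (c = 2 ∧ (c' = 3 ∨ c' = 4))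

/-- The composition `A ⋆ B` of a task `A` on `{0,…,n}` with a task `B` on
`{0,…,m}`: each edge of `A` is replaced by an appropriately oriented copy of
`B`; its edges are `{i·m + r, i·m + r + 1}` for `{i, i+1} ∈ A` and
`{j, j+1} ∈ B`, where `r = j` if `i` is even and `r = m - 1 - j` if `i` is odd
(edges encoded by left endpoints). -/
def comp (m : ℕ) (A B : Finset ℕ) : Finset ℕ :=
  (A ×ˢ B).image fun p => p.1 * m + (if Even p.1 then p.2 else m - 1 - p.2)

/-- `iterTask n A k` is the iterate `A^{⋆k}` (for `k ≥ 1`) of a task `A` on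
`{0,…,n}`, a task on `{0,…,n^k}`: `A^{⋆1} = A`, `A^{⋆(k+1)} = A^{⋆k} ⋆ A`.
(The value at `k = 0` is irrelevant and set to `A`.) -/
def iterTask (n : ℕ) (A : Finset ℕ) : ℕ → Finset ℕ
  | 0 => A
  | 1 => A
  | k + 2 => comp n (iterTask n A (k + 1)) A

/-- A chromatic carrier-preserving simplicial map `δ` from a task `A` on
`{0,…,n}` to the subdivided 1-simplex on `{0,…,m}`: `δ` maps `{0,…,n}` to
`{0,…,m}`; `δ i ≡ i (mod 2)` for every vertex incident to an edge of `A`;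
`|δ (i+1) - δ i| = 1` for every edge `{i, i+1} ∈ A`; `δ 0 = 0` whenever
`{0,1} ∈ A`; and `δ n = m` whenever `{n-1, n} ∈ A`. -/
def IsCCMap (n m : ℕ) (A : Finset ℕ) (δ : ℕ → ℕ) : Prop :=
  (∀ i ≤ n, δ i ≤ m) ∧
  (∀ i ∈ A, δ i % 2 = i % 2 ∧ δ (i + 1) % 2 = (i + 1) % 2) ∧
  (∀ i ∈ A, δ (i + 1) = δ i + 1 ∨ δ i = δ (i + 1) + 1) ∧
  (0 ∈ A → δ 0 = 0) ∧
  (n - 1 ∈ A → δ n = m)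

/-- The image task `δ(A) = { {δ i, δ (i+1)} : {i, i+1} ∈ A }`
(edges encoded by left endpoints, i.e. by `min (δ i) (δ (i+1))`). -/
def imageTask (A : Finset ℕ) (δ : ℕ → ℕ) : Finset ℕ :=
  A.image fun i => min (δ i) (δ (i + 1))

/-- `Solves m n B A`: the affine model `B*` of a task `B` on `{0,…,m}` solves
the task `A` on `{0,…,n}`, i.e. there exist `k ≥ 1` and a chromatic
carrier-preserving simplicial map `δ` from `B^{⋆k}` (a task on `{0,…,m^k}`)
to the subdivided 1-simplex on `{0,…,n}` with `δ(B^{⋆k}) ⊆ A`. -/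
def Solves (m n : ℕ) (B A : Finset ℕ) : Prop :=
  ∃ k, 1 ≤ k ∧ ∃ δ : ℕ → ℕ,
    IsCCMap (m ^ k) n (iterTask m B k) δ ∧ imageTask (iterTask m B k) δ ⊆ A

section Aux

/-- If there is a path from `0` to `n` using edges of `A`, then every edge
`i < n` lies in `A` (crossing argument). -/
lemma p1_mem {n : ℕ} {A : Finset ℕ} (h : P1 n A) : ∀ i, i < n → i ∈ A := by
  have key : ∀ x y : ℕ, Relation.ReflTransGen (StepRel A) x y →
      ∀ i, x ≤ i → i < y → i ∈ A := by
    intro x y hxy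
    induction hxy with
    | refl => intro i h1 h2; omega
    | @tail b c hab hstep ih =>
      intro i h1 h2
      rcases hstep with ⟨hc, hb⟩ | ⟨hb, hc⟩
      · by_cases hib : i = b
        · exact hib ▸ hb
        · exact ih i h1 (by omega)
      · exact ih i h1 (by omega)
  intro i hi
  exact key 0 n h i (Nat.zero_le _) hi

/-- Conversely, if all edges are present, there is a path from `0` to `n`. -/
lemma mem_p1 {n : ℕ} {A : Finset ℕ} (h : ∀ i, i < n → i ∈ A) : P1 n A := by
  suffices H : ∀ j, j ≤ n → Relation.ReflTransGen (StepRel A) 0 j from H n le_rfl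
  intro j
  induction j with
  | zero => intro _; exact Relation.ReflTransGen.refl
  | succ j ih =>
    intro hj
    exact (ih (by omega)).tail (Or.inl ⟨rfl, h j (by omega)⟩)

lemma comp_range (N m : ℕ) :
    comp m (Finset.range N) (Finset.range m) = Finset.range (N * m) := by
  ext x
  simp only [comp, Finset.mem_image, Finset.mem_product, Finset.mem_range, Prod.exists]
  constructor
  · rintro ⟨i, j, ⟨hi, hj⟩, rfl⟩
    have hr : (if Even i then j else m - 1 - j) < m := by split <;> omega
    have h1 : i * m + m ≤ N * m := by
      have : i + 1 ≤ N := hi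
      calc i * m + m = (i + 1) * m := by ring
        _ ≤ N * m := Nat.mul_le_mul_right m this
    omega
  · intro hx
    have hm : 0 < m := by
      rcases Nat.eq_zero_or_pos m with h | h
      · subst h; omega
      · exact h
    refine ⟨x / m, if Even (x / m) then x % m else m - 1 - x % m, ⟨?_, ?_⟩, ?_⟩
    · exact (Nat.div_lt_iff_lt_mul hm).2 hx
    · have := Nat.mod_lt x hm; split <;> omega
    · have h1 := Nat.div_add_mod x m
      have h2 := Nat.mod_lt x hm
      have h3 : m * (x / m) = x / m * m := Nat.mul_comm _ _
      split <;> omega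

lemma iterTask_range (m : ℕ) : ∀ k, 1 ≤ k →
    iterTask m (Finset.range m) k = Finset.range (m ^ k) := by
  intro k
  induction k with
  | zero => omega
  | succ k ih =>
    intro _
    match k, ih with
    | 0, _ => simp [iterTask, pow_one]
    | k' + 1, ih =>
      show comp m (iterTask m (Finset.range m) (k' + 1)) (Finset.range m) = _
      rw [ih (by omega), comp_range, ← pow_succ]

lemma solve_k1 {n m : ℕ} {A B : Finset ℕ} (δ : ℕ → ℕ)
    (h : IsCCMap m n B δ) (him : imageTask B δ ⊆ A) : Solves m n B A := by
  refine ⟨1, le_rfl, δ, ?_, ?_⟩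
  · simpa [iterTask, pow_one] using h
  · simpa [iterTask] using him

/-- Class 3 and the "low part" fold: everything onto the edge `{0,1}`. -/
lemma solve_class3 {n m : ℕ} {A B : Finset ℕ} (hn : 1 ≤ n)
    (hA2 : 0 ∈ A) (hB3 : ¬ (m - 1 ∈ B)) : Solves m n B A := by
  refine solve_k1 (fun i => i % 2) ⟨?_, ?_, ?_, ?_, ?_⟩ ?_
  · intro i _; dsimp only; omega
  · intro i _; dsimp only; omega
  · intro i _; dsimp only; omega
  · intro _; rfl
  · intro h; exact absurd h hB3
  · intro x hx
    simp only [imageTask, Finset.mem_image] at hx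
    obtain ⟨i, _, rfl⟩ := hx
    have : min (i % 2) ((i + 1) % 2) = 0 := by omega
    rw [this]; exact hA2

/-- Class 4 fold: everything onto the edge `{n-1,n}`. -/
lemma solve_class4 {n m : ℕ} {A B : Finset ℕ} (hn : 1 ≤ n)
    (hnodd : n % 2 = 1) (hmodd : m % 2 = 1)
    (hA3 : n - 1 ∈ A) (hB2 : ¬ (0 ∈ B)) : Solves m n B A := by
  refine solve_k1 (fun i => if i % 2 = 1 then n else n - 1) ⟨?_, ?_, ?_, ?_, ?_⟩ ?_
  · intro i _; dsimp only; split <;> omega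
  · intro i _; dsimp only; constructor <;> (split <;> omega)
  · intro i _; dsimp only; split <;> (split <;> omega)
  · intro h; exact absurd h hB2
  · intro _; simp [hmodd]
  · intro x hx
    simp only [imageTask, Finset.mem_image] at hx
    obtain ⟨i, _, rfl⟩ := hx
    have : min (if i % 2 = 1 then n else n - 1)
        (if (i + 1) % 2 = 1 then n else n - 1) = n - 1 := by
      split <;> (split <;> omega)
    rw [this]; exact hA3

/-- Class 5 fold: everything onto an arbitrary edge `{a, a+1}` of `A`. -/
lemma solve_class5 {n m : ℕ} {A B : Finset ℕ} (a : ℕ) (ha : a ∈ A) (han : a < n)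
    (hB2 : ¬ (0 ∈ B)) (hB3 : ¬ (m - 1 ∈ B)) : Solves m n B A := by
  refine solve_k1 (fun i => if i % 2 = a % 2 then a else a + 1) ⟨?_, ?_, ?_, ?_, ?_⟩ ?_
  · intro i _; dsimp only; split <;> omega
  · intro i _; dsimp only; constructor <;> (split <;> omega)
  · intro i _; dsimp only; split <;> (split <;> omega)
  · intro h; exact absurd h hB2
  · intro h; exact absurd h hB3
  · intro x hx
    simp only [imageTask, Finset.mem_image] at hx
    obtain ⟨i, _, rfl⟩ := hx
    have : min (if i % 2 = a % 2 then a else a + 1)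
        (if (i + 1) % 2 = a % 2 then a else a + 1) = a := by
      split <;> (split <;> omega)
    rw [this]; exact ha

/-- Class 2: fold the part of `B` below a missing edge `c` onto `{0,1}` and
the part above `c` onto `{n-1,n}`. -/
lemma solve_class2 {n m : ℕ} {A B : Finset ℕ} (c : ℕ) (hc : c ∉ B) (hcm : c < m)
    (hn : 1 ≤ n) (hnodd : n % 2 = 1) (hmodd : m % 2 = 1)
    (hA2 : 0 ∈ A) (hA3 : n - 1 ∈ A) : Solves m n B A := by
  refine solve_k1 (fun i => if i ≤ c then i % 2 else if i % 2 = 1 then n else n - 1)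
    ⟨?_, ?_, ?_, ?_, ?_⟩ ?_
  · intro i _; dsimp only; split
    · omega
    · split <;> omega
  · intro i hi
    have hic : i ≠ c := fun h => hc (h ▸ hi)
    dsimp only
    constructor <;> (split <;> [omega; (split <;> omega)])
  · intro i hi
    have hic : i ≠ c := fun h => hc (h ▸ hi)
    rcases Nat.lt_or_ge i c with h | h
    · simp only [if_pos (le_of_lt h), if_pos (by omega : i + 1 ≤ c)]; omega
    · have h' : c < i := lt_of_le_of_ne h (Ne.symm hic)
      simp only [if_neg (by omega : ¬ i ≤ c), if_neg (by omega : ¬ i + 1 ≤ c)]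
      split <;> (split <;> omega)
  · intro _; simp
  · intro _
    dsimp only
    rw [if_neg (by omega : ¬ m ≤ c), if_pos hmodd]
  · intro x hx
    simp only [imageTask, Finset.mem_image] at hx
    obtain ⟨i, hi, rfl⟩ := hx
    have hic : i ≠ c := fun h => hc (h ▸ hi)
    rcases Nat.lt_or_ge i c with h | h
    · have : min (if i ≤ c then i % 2 else if i % 2 = 1 then n else n - 1)
          (if i + 1 ≤ c then (i + 1) % 2 else if (i + 1) % 2 = 1 then n else n - 1)
          = 0 := by
        rw [if_pos (le_of_lt h), if_pos (by omega : i + 1 ≤ c)]; omega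
      rw [this]; exact hA2
    · have h' : c < i := lt_of_le_of_ne h (Ne.symm hic)
      have : min (if i ≤ c then i % 2 else if i % 2 = 1 then n else n - 1)
          (if i + 1 ≤ c then (i + 1) % 2 else if (i + 1) % 2 = 1 then n else n - 1)
          = n - 1 := by
        rw [if_neg (by omega : ¬ i ≤ c), if_neg (by omega : ¬ i + 1 ≤ c)]
        split <;> (split <;> omega)
      rw [this]; exact hA3

/-- The triangle-wave map folding `{0,…,M}` onto `{0,…,n}`. -/
lemma triangle_props (n : ℕ) (hn : 3 ≤ n) (i : ℕ) :
    (if i % (2 * n) ≤ n then i % (2 * n) else 2 * n - i % (2 * n)) ≤ n ∧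
    (if i % (2 * n) ≤ n then i % (2 * n) else 2 * n - i % (2 * n)) % 2 = i % 2 ∧
    ((if (i + 1) % (2 * n) ≤ n then (i + 1) % (2 * n) else 2 * n - (i + 1) % (2 * n))
      = (if i % (2 * n) ≤ n then i % (2 * n) else 2 * n - i % (2 * n)) + 1 ∨
     (if i % (2 * n) ≤ n then i % (2 * n) else 2 * n - i % (2 * n))
      = (if (i + 1) % (2 * n) ≤ n then (i + 1) % (2 * n) else 2 * n - (i + 1) % (2 * n)) + 1) := by
  have h2n : 0 < 2 * n := by omega
  have hr : i % (2 * n) < 2 * n := Nat.mod_lt i h2n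
  have hpar : i % (2 * n) % 2 = i % 2 := Nat.mod_mod_of_dvd i ⟨n, rfl⟩
  have hsucc : (i + 1) % (2 * n) =
      if i % (2 * n) + 1 = 2 * n then 0 else i % (2 * n) + 1 := by
    rcases Nat.lt_or_ge (i % (2 * n) + 1) (2 * n) with h | h
    · rw [if_neg (by omega)]
      conv_lhs => rw [← Nat.div_add_mod i (2 * n)]
      rw [Nat.add_assoc, Nat.mul_add_mod, Nat.mod_eq_of_lt h]
    · have he : i % (2 * n) + 1 = 2 * n := by omega
      rw [if_pos he]
      conv_lhs => rw [← Nat.div_add_mod i (2 * n)]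
      rw [Nat.add_assoc, Nat.mul_add_mod, he, Nat.mod_self]
  refine ⟨by split <;> omega, by split <;> omega, ?_⟩
  rw [hsucc]
  split_ifs <;> omega

lemma solve_class1 {ℓ ℓ' n m : ℕ} {A B : Finset ℕ}
    (hℓ : 1 ≤ ℓ) (hℓ' : 1 ≤ ℓ') (hn : n = 3 ^ ℓ) (hm : m = 3 ^ ℓ')
    (hAlt : ∀ i ∈ A, i < n) (hBlt : ∀ i ∈ B, i < m)
    (hA1 : P1 n A) (hB1 : P1 m B) : Solves m n B A := by
  have hn3 : 3 ≤ n := by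
    subst hn
    calc 3 = 3 ^ 1 := (pow_one 3).symm
    _ ≤ 3 ^ ℓ := Nat.pow_le_pow_right (by norm_num) hℓ
  have hBfull : B = Finset.range m := by
    ext i
    simp only [Finset.mem_range]
    exact ⟨fun h => hBlt i h, fun h => p1_mem hB1 i h⟩
  have hAfull : ∀ i, i < n → i ∈ A := p1_mem hA1
  subst hBfull
  -- the target value of the fold at `m ^ ℓ`
  have hmod : m ^ ℓ % (2 * n) = n := by
    have hfac : m ^ ℓ = n * 3 ^ (ℓ' * ℓ - ℓ) := by
      rw [hm, hn, ← pow_mul, ← pow_add]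
      congr 1
      have : ℓ ≤ ℓ' * ℓ := Nat.le_mul_of_pos_left ℓ hℓ'
      omega
    obtain ⟨q, hq⟩ := Odd.pow (n := ℓ' * ℓ - ℓ) (⟨1, by norm_num⟩ : Odd 3)
    rw [hfac, hq]
    have : n * (2 * q + 1) = n + q * (2 * n) := by ring
    rw [this, Nat.add_mul_mod_self_right, Nat.mod_eq_of_lt (by omega)]
  refine ⟨ℓ, hℓ, fun i => if i % (2 * n) ≤ n then i % (2 * n) else 2 * n - i % (2 * n),
    ?_, ?_⟩
  · rw [iterTask_range m ℓ hℓ]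
    refine ⟨?_, ?_, ?_, ?_, ?_⟩
    · intro i _; exact (triangle_props n hn3 i).1
    · intro i _
      exact ⟨(triangle_props n hn3 i).2.1, (triangle_props n hn3 (i + 1)).2.1⟩
    · intro i _; exact (triangle_props n hn3 i).2.2
    · intro _; simp [Nat.mod_eq_of_lt (by omega : (0:ℕ) < 2 * n)]
    · intro _; dsimp only; rw [hmod, if_pos le_rfl]
  · rw [iterTask_range m ℓ hℓ]
    intro x hx
    simp only [imageTask, Finset.mem_image] at hx
    obtain ⟨i, _, rfl⟩ := hx
    obtain ⟨hb1, -, hstep⟩ := triangle_props n hn3 i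
    have hb2 := (triangle_props n hn3 (i + 1)).1
    refine hAfull _ ?_
    rcases hstep with h | h <;> omega

end Aux

/-- Tasks in the same class are equivalent: for any two 2-process affine tasks
`A` on `n = 3^ℓ` and `B` on `m = 3^ℓ'` with `class(A) = class(B)`, the affine
model `B*` solves `A`: there exist `k ≥ 1` and a chromatic carrier-preserving
simplicial map `δ` from `B^{⋆k}` to the subdivided 1-simplex on `{0,…,n}`
with `δ(B^{⋆k}) ⊆ A`. -/
theorem same_class_equivalent
    (ℓ ℓ' n m : ℕ) (hℓ : 1 ≤ ℓ) (hℓ' : 1 ≤ ℓ') (hn : n = 3 ^ ℓ) (hm : m = 3 ^ ℓ')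
    (A B : Finset ℕ) (hAne : A.Nonempty) (hAlt : ∀ i ∈ A, i < n)
    (hBne : B.Nonempty) (hBlt : ∀ i ∈ B, i < m)
    (hclass : classOf n A = classOf m B) :
    Solves m n B A := by
  have hn3 : 3 ≤ n := by
    subst hn
    calc 3 = 3 ^ 1 := (pow_one 3).symm
    _ ≤ 3 ^ ℓ := Nat.pow_le_pow_right (by norm_num) hℓ
  have hm3 : 3 ≤ m := by
    subst hm
    calc 3 = 3 ^ 1 := (pow_one 3).symm
    _ ≤ 3 ^ ℓ' := Nat.pow_le_pow_right (by norm_num) hℓ'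
  have hnodd : n % 2 = 1 := by
    subst hn; rw [Nat.pow_mod]; norm_num
  have hmodd : m % 2 = 1 := by
    subst hm; rw [Nat.pow_mod]; norm_num
  by_cases hA1 : P1 n A
  · by_cases hB1 : P1 m B
    · exact solve_class1 hℓ hℓ' hn hm hAlt hBlt hA1 hB1
    · exfalso
      simp only [classOf, if_pos hA1, if_neg hB1] at hclass
      split_ifs at hclass <;> omega
  · by_cases hB1 : P1 m B
    · exfalso
      simp only [classOf, if_neg hA1, if_pos hB1] at hclass
      split_ifs at hclass <;> omega
    · -- B has a missing edge
      have hcB : ∃ c, c < m ∧ c ∉ B := by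
        by_contra h
        push_neg at h
        exact hB1 (mem_p1 h)
      obtain ⟨c, hcm, hc⟩ := hcB
      simp only [classOf, if_neg hA1, if_neg hB1] at hclass
      by_cases hA2 : P2 A <;> by_cases hA3 : P3 n A <;>
        by_cases hB2 : P2 B <;> by_cases hB3 : P3 m B <;>
        simp only [if_pos, if_neg, hA2, hA3, hB2, hB3, if_true, if_false] at hclass <;>
        first
        | omega
        | exact solve_class2 c hc hcm (by omega) hnodd hmodd hA2 hA3
        | exact solve_class3 (by omega) hA2 hB3
        | exact solve_class4 (by omega) hnodd hmodd hA3 hB2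
        | · obtain ⟨a, ha⟩ := hAne
            exact solve_class5 a ha (hAlt a ha) hB2 hB3
end

section
/- Iterating an affine task can only decrease its class: for every 2-process affine task A on n = 3^ℓ (ℓ ≥ 1) and every k ≥ 1, class(A^{⋆k}) ⊑ class(A), where ⊑ is the class order. -/
/-!
The class is in fact invariant under iteration. Write `A⋆B` with `A` on `{0,…,M}` and `B` on
`{0,…,m}`. Its first block is an unreversed copy of `B`, and so is its last one, because `M` is
odd (as `3^ℓ` and all its powers are); hence `A⋆B` contains `{0,1}` (resp. `{Mm-1,Mm}`) iff `A`
and `B` both contain their first (resp. last) edge. A path `0 ↝ M` in `A` together with a path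
`0 ↝ m` in `B` assembles block by block into a path `0 ↝ Mm` in `A⋆B`, and conversely the
projection `x ↦ x / m` maps a path `0 ↝ Mm` in `A⋆B` onto a path `0 ↝ M` in `A`. By induction
`P₁`, `P₂`, `P₃` hold for `A^{⋆k}` exactly when they hold for `A`.
-/

open Relation

instance (A : Finset ℕ) : Std.Symm (StepRel A) := ⟨fun _ _ h => h.symm⟩

lemma reflTransGen_stepRel_symm {A : Finset ℕ} {x y : ℕ} (h : ReflTransGen (StepRel A) x y) :
    ReflTransGen (StepRel A) y x :=
  ReflTransGen.stdSymm.symm _ _ h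

section comp

variable {m M : ℕ} {X Y : Finset ℕ}

lemma mem_comp {x : ℕ} :
    x ∈ comp m X Y ↔ ∃ i ∈ X, ∃ j ∈ Y, i * m + (if Even i then j else m - 1 - j) = x := by
  simp only [comp, Finset.mem_image, Finset.mem_product, Prod.exists]
  tauto

lemma comp_offset_lt {i j : ℕ} (hj : j < m) : (if Even i then j else m - 1 - j) < m := by
  split <;> omega

lemma mul_add_div_of_lt {i r : ℕ} (hr : r < m) : (i * m + r) / m = i := by
  rw [add_comm, Nat.add_mul_div_right _ _ (by omega), Nat.div_eq_of_lt hr, zero_add]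

lemma div_mem_of_mem_comp (hY : ∀ j ∈ Y, j < m) {x : ℕ} (hx : x ∈ comp m X Y) : x / m ∈ X := by
  obtain ⟨i, hi, j, hj, rfl⟩ := mem_comp.mp hx
  rwa [mul_add_div_of_lt (comp_offset_lt (hY j hj))]

lemma zero_mem_comp_iff (hY : ∀ j ∈ Y, j < m) : 0 ∈ comp m X Y ↔ 0 ∈ X ∧ 0 ∈ Y := by
  refine ⟨fun h => ?_, fun ⟨hX0, hY0⟩ => mem_comp.mpr ⟨0, hX0, 0, hY0, by simp⟩⟩
  obtain ⟨i, hi, j, hj, hx⟩ := mem_comp.mp h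
  have hm : 0 < m := (Nat.zero_le j).trans_lt (hY j hj)
  obtain rfl : i = 0 := by simpa [hm.ne'] using (Nat.add_eq_zero_iff.mp hx).1
  simp_all

lemma sub_one_mem_comp_iff (hM : Odd M) (hY : ∀ j ∈ Y, j < m) :
    M * m - 1 ∈ comp m X Y ↔ M - 1 ∈ X ∧ m - 1 ∈ Y := by
  have hlast : Even (M - 1) := Nat.Odd.sub_odd hM odd_one
  have hsplit (hm : 0 < m) : M * m - 1 = (M - 1) * m + (m - 1) := by
    rw [Nat.sub_one_mul]
    have := Nat.le_mul_of_pos_left m hM.pos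
    omega
  constructor
  · intro h
    obtain ⟨i, hi, j, hj, hx⟩ := mem_comp.mp h
    have hjm := hY j hj
    have hr := comp_offset_lt (i := i) hjm
    rw [hsplit (by omega)] at hx
    obtain rfl : i = M - 1 := by
      rw [← mul_add_div_of_lt (i := i) hr, hx, mul_add_div_of_lt (by omega)]
    rw [if_pos hlast] at hx
    obtain rfl : j = m - 1 := by omega
    exact ⟨hi, hj⟩
  · rintro ⟨hX', hY'⟩
    refine mem_comp.mpr ⟨M - 1, hX', m - 1, hY', ?_⟩
    rw [if_pos hlast, hsplit ((Nat.zero_le _).trans_lt (hY _ hY'))]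

lemma reflTransGen_block (hY : ∀ j ∈ Y, j < m) (hPY : P1 m Y) {i : ℕ} (hi : i ∈ X) :
    ReflTransGen (StepRel (comp m X Y)) (i * m) ((i + 1) * m) := by
  have hend : (i + 1) * m = i * m + m := by ring
  by_cases hev : Even i
  · have hedge : ∀ j ∈ Y, i * m + j ∈ comp m X Y := fun j hj =>
      mem_comp.mpr ⟨i, hi, j, hj, by rw [if_pos hev]⟩
    have hpath := ReflTransGen.lift (p := StepRel (comp m X Y)) (fun j => i * m + j) ?_ _ _ hPY
    · simpa [Function.onFun, hend] using hpath
    rintro x y (⟨rfl, hx⟩ | ⟨rfl, hy⟩)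
    · exact .inl ⟨rfl, hedge x hx⟩
    · exact .inr ⟨rfl, hedge y hy⟩
  · have hedge : ∀ j ∈ Y, (i + 1) * m - (j + 1) ∈ comp m X Y := fun j hj =>
      mem_comp.mpr ⟨i, hi, j, hj, by have := hY j hj; rw [if_neg hev]; omega⟩
    have hpath := ReflTransGen.lift (p := StepRel (comp m X Y)) (fun j => (i + 1) * m - j) ?_ _ _ hPY
    · simpa [hend] using reflTransGen_stepRel_symm hpath
    rintro x y (⟨rfl, hx⟩ | ⟨rfl, hy⟩)
    · have := hY x hx
      exact .inr ⟨by simp only; omega, hedge x hx⟩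
    · have := hY y hy
      exact .inl ⟨by simp only; omega, hedge y hy⟩

lemma P1_comp (hY : ∀ j ∈ Y, j < m) (hPX : P1 M X) (hPY : P1 m Y) : P1 (M * m) (comp m X Y) := by
  have hpath := ReflTransGen.lift' (p := StepRel (comp m X Y)) (fun i => i * m) ?_ _ _ hPX
  · simpa [P1, Function.onFun] using hpath
  rintro x y (⟨rfl, hx⟩ | ⟨rfl, hy⟩)
  · exact reflTransGen_block hY hPY hx
  · exact reflTransGen_stepRel_symm (reflTransGen_block hY hPY hy)

lemma P1_of_P1_comp (hm : 0 < m) (hY : ∀ j ∈ Y, j < m) (h : P1 (M * m) (comp m X Y)) :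
    P1 M X := by
  have hproj : ∀ x ∈ comp m X Y, ReflTransGen (StepRel X) (x / m) ((x + 1) / m) := by
    intro x hx
    rw [Nat.succ_div]
    split
    · exact .single (.inl ⟨rfl, div_mem_of_mem_comp hY hx⟩)
    · exact .refl
  have hpath := ReflTransGen.lift' (p := StepRel X) (fun x => x / m) ?_ _ _ h
  · simpa [P1, Function.onFun, Nat.mul_div_cancel _ hm] using hpath
  rintro x y (⟨rfl, hx⟩ | ⟨rfl, hy⟩)
  · exact hproj x hx
  · exact reflTransGen_stepRel_symm (hproj y hy)

end comp

section iterTask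

variable {n : ℕ} {A : Finset ℕ}

lemma iterTask_succ {k : ℕ} (hk : 1 ≤ k) : iterTask n A (k + 1) = comp n (iterTask n A k) A := by
  obtain ⟨k, rfl⟩ := Nat.exists_eq_add_of_le' hk
  rfl

lemma zero_mem_iterTask_iff (hA : ∀ j ∈ A, j < n) {k : ℕ} (hk : 1 ≤ k) :
    0 ∈ iterTask n A k ↔ 0 ∈ A := by
  induction k, hk using Nat.le_induction with
  | base => rfl
  | succ k hk ih => rw [iterTask_succ hk, zero_mem_comp_iff hA, ih, and_self]

lemma sub_one_mem_iterTask_iff (hn : Odd n) (hA : ∀ j ∈ A, j < n) {k : ℕ} (hk : 1 ≤ k) :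
    n ^ k - 1 ∈ iterTask n A k ↔ n - 1 ∈ A := by
  induction k, hk using Nat.le_induction with
  | base => simp [iterTask]
  | succ k hk ih =>
    rw [iterTask_succ hk, pow_succ, sub_one_mem_comp_iff hn.pow hA, ih, and_self]

lemma P1_iterTask_iff (hn : 0 < n) (hA : ∀ j ∈ A, j < n) {k : ℕ} (hk : 1 ≤ k) :
    P1 (n ^ k) (iterTask n A k) ↔ P1 n A := by
  induction k, hk using Nat.le_induction with
  | base => simp [iterTask]
  | succ k hk ih =>
    rw [iterTask_succ hk, pow_succ]
    exact ⟨fun h => ih.mp (P1_of_P1_comp hn hA h), fun h => P1_comp hA (ih.mpr h) h⟩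

lemma classOf_iterTask (hn : Odd n) (hA : ∀ j ∈ A, j < n) {k : ℕ} (hk : 1 ≤ k) :
    classOf (n ^ k) (iterTask n A k) = classOf n A := by
  have h1 := P1_iterTask_iff hn.pos hA hk
  have h2 := zero_mem_iterTask_iff hA hk
  have h3 := sub_one_mem_iterTask_iff hn hA hk
  rw [classOf, classOf, P2, P2, P3, P3, h1, h2, h3]

end iterTask

theorem iter_class_le_general
    (ℓ n : ℕ) (hn : n = 3 ^ ℓ)
    (A : Finset ℕ) (hlt : ∀ i ∈ A, i < n)
    (k : ℕ) (hk : 1 ≤ k) :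
    ClassLE (classOf (n ^ k) (iterTask n A k)) (classOf n A) :=
  .inl (classOf_iterTask (hn ▸ Odd.pow (by decide)) hlt hk)

/-- Iterating an affine task can only decrease its class: for every 2-process
affine task `A` on `n = 3^ℓ` (`ℓ ≥ 1`) and every `k ≥ 1`,
`class(A^{⋆k}) ⊑ class(A)` in the class order. -/
theorem iter_class_le
    (ℓ n : ℕ) (hℓ : 1 ≤ ℓ) (hn : n = 3 ^ ℓ)
    (A : Finset ℕ) (hne : A.Nonempty) (hlt : ∀ i ∈ A, i < n)
    (k : ℕ) (hk : 1 ≤ k) :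
    ClassLE (classOf (n ^ k) (iterTask n A k)) (classOf n A) :=
  iter_class_le_general ℓ n hn A hlt k hk
end

section
/- Carrier- and color-preserving simplicial maps can only decrease the class: for every 2-process affine task A on n = 3^ℓ (ℓ ≥ 1) and every chromatic carrier-preserving simplicial map δ from A to the subdivided 1-simplex on {0,…,m} (m = 3^{ℓ'}, ℓ' ≥ 1), the image task δ(A) is a 2-process affine task on m and class(δ(A)) ⊑ class(A), where ⊑ is the class order. -/
/-! A carrier-preserving map sends the edge `{0,1}` to `{0,1}` and `{n-1,n}` to
`{m-1,m}`, and it sends a path of `A` from `0` to `n` to a path of `δ(A)` from `0` to `m`. So each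
of `P₁`, `P₂`, `P₃` passes from `A` to `δ(A)`, and the class is antitone in these three
properties.
-/

section

variable {n m : ℕ} {A B : Finset ℕ} {δ : ℕ → ℕ}

lemma P1.zero_mem (hn : 0 < n) (h : P1 n A) : 0 ∈ A := by
  rcases h.cases_head with h0 | ⟨b, ⟨_, hb⟩ | ⟨hb, _⟩, _⟩
  · omega
  · exact hb
  · omega

lemma P1.pred_mem (hlt : ∀ i ∈ A, i < n) (hn : 0 < n) (h : P1 n A) : n - 1 ∈ A := by
  rcases h.cases_tail with h0 | ⟨b, _, ⟨hb, hbA⟩ | ⟨_, hnA⟩⟩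
  · omega
  · rwa [hb, Nat.add_sub_cancel]
  · exact absurd (hlt n hnA) (lt_irrefl n)

lemma min_mem_imageTask (δ : ℕ → ℕ) {i : ℕ} (hi : i ∈ A) : min (δ i) (δ (i + 1)) ∈ imageTask A δ :=
  Finset.mem_image_of_mem (fun i => min (δ i) (δ (i + 1))) hi

lemma StepRel.map (hstep : ∀ i ∈ A, δ (i + 1) = δ i + 1 ∨ δ i = δ (i + 1) + 1)
    {a b : ℕ} (hab : StepRel A a b) : StepRel (imageTask A δ) (δ a) (δ b) := by
  rcases hab with ⟨rfl, ha⟩ | ⟨rfl, hb⟩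
  · rcases hstep a ha with hs | hs
    · exact Or.inl ⟨hs, by simpa [hs] using min_mem_imageTask δ ha⟩
    · exact Or.inr ⟨hs, by simpa [hs] using min_mem_imageTask δ ha⟩
  · rcases hstep b hb with hs | hs
    · exact Or.inr ⟨hs, by simpa [hs] using min_mem_imageTask δ hb⟩
    · exact Or.inl ⟨hs, by simpa [hs] using min_mem_imageTask δ hb⟩

lemma imageTask_lt (hδ : IsCCMap n m A δ) (hlt : ∀ i ∈ A, i < n) :
    ∀ j ∈ imageTask A δ, j < m := by
  intro j hj
  obtain ⟨i, hi, rfl⟩ := Finset.mem_image.1 hj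
  have h₁ := hδ.1 i (hlt i hi).le
  have h₂ := hδ.1 (i + 1) (hlt i hi)
  rcases hδ.2.2.1 i hi with h | h <;> omega

lemma P1.map (hδ : IsCCMap n m A δ) (hlt : ∀ i ∈ A, i < n) (hn : 0 < n)
    (h : P1 n A) : P1 m (imageTask A δ) := by
  have hpath : Relation.ReflTransGen (StepRel (imageTask A δ)) (δ 0) (δ n) :=
    h.lift δ fun _ _ => StepRel.map hδ.2.2.1
  rwa [hδ.2.2.2.1 (h.zero_mem hn), hδ.2.2.2.2 (h.pred_mem hlt hn)] at hpath

lemma P2.map (hδ : IsCCMap n m A δ) (h : P2 A) : P2 (imageTask A δ) := by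
  have h₀ := hδ.2.2.2.1 h
  have h₁ : δ (0 + 1) = 1 := by rcases hδ.2.2.1 0 h with hs | hs <;> omega
  simpa [P2, h₀, h₁] using min_mem_imageTask δ h

lemma P3.map (hδ : IsCCMap n m A δ) (hn : 0 < n) (h : P3 n A) :
    P3 m (imageTask A δ) := by
  have hsucc : n - 1 + 1 = n := Nat.sub_add_cancel hn
  have hN := hδ.2.2.2.2 h
  have hbd := hδ.1 (n - 1) (Nat.sub_le n 1)
  have hlast : δ (n - 1) = m - 1 := by
    rcases hδ.2.2.1 (n - 1) h with hs | hs <;> rw [hsucc, hN] at hs <;> omega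
  have hmem := min_mem_imageTask δ h
  rw [hsucc, hN, hlast] at hmem
  rwa [min_eq_left (Nat.sub_le m 1)] at hmem

lemma classLE_classOf_of_imp (h₁ : P1 n A → P1 m B) (h₂ : P2 A → P2 B)
    (h₃ : P3 n A → P3 m B) : ClassLE (classOf m B) (classOf n A) := by
  unfold classOf ClassLE
  split_ifs <;> simp_all

end

theorem map_class_le_general
    (n m : ℕ)
    (A : Finset ℕ) (hne : A.Nonempty) (hlt : ∀ i ∈ A, i < n)
    (δ : ℕ → ℕ) (hδ : IsCCMap n m A δ) :
    (imageTask A δ).Nonempty ∧ (∀ i ∈ imageTask A δ, i < m) ∧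
      ClassLE (classOf m (imageTask A δ)) (classOf n A) := by
  obtain ⟨i, hi⟩ := hne
  have hn : 0 < n := Nat.zero_lt_of_lt (hlt i hi)
  exact ⟨⟨_, min_mem_imageTask δ hi⟩, imageTask_lt hδ hlt,
    classLE_classOf_of_imp (P1.map hδ hlt hn) (P2.map hδ) (P3.map hδ hn)⟩

/-- Chromatic carrier-preserving simplicial maps can only decrease the class:
for every 2-process affine task `A` on `n = 3^ℓ` and every chromatic
carrier-preserving simplicial map `δ` from `A` to the subdivided 1-simplex on
`{0,…,m}` (`m = 3^ℓ'`), the image `δ(A)` is a 2-process affine task on `m`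
and `class(δ(A)) ⊑ class(A)`. -/
theorem map_class_le
    (ℓ ℓ' n m : ℕ) (hℓ : 1 ≤ ℓ) (hℓ' : 1 ≤ ℓ') (hn : n = 3 ^ ℓ) (hm : m = 3 ^ ℓ')
    (A : Finset ℕ) (hne : A.Nonempty) (hlt : ∀ i ∈ A, i < n)
    (δ : ℕ → ℕ) (hδ : IsCCMap n m A δ) :
    (imageTask A δ).Nonempty ∧ (∀ i ∈ imageTask A δ, i < m) ∧
      ClassLE (classOf m (imageTask A δ)) (classOf n A) :=
  map_class_le_general n m A hne hlt δ hδ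
end

section
/- Property P₁ (connectivity of the two solo vertices) is stable under composition of affine tasks: for tasks A on n = 3^ℓ and B on m = 3^{ℓ'} (ℓ, ℓ' ≥ 1), if vertices 0 and n are joined by a path of edges of A and vertices 0 and m are joined by a path of edges of B, then vertices 0 and n·m are joined by a path of edges of A⋆B. -/
/-!
In a path graph a walk from `0` to `n` has to cross every edge `{k, k+1}` with `k < n`, so
`P1 n A` just says that `A` contains all these edges. Every `k < n·m` is `i·m + r` with
`i < n`, `r < m`, and the edge with left endpoint `k` is the image of the pair `(i, j)`,
where `j = r` for even `i` and `j = m - 1 - r` for odd `i`; hence `A ⋆ B` is full as well.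
-/

theorem reflTransGen_stepRel_le_of_notMem {A : Finset ℕ} {k x y : ℕ} (hk : k ∉ A)
    (h : Relation.ReflTransGen (StepRel A) x y) (hx : x ≤ k) : y ≤ k := by
  induction h with
  | refl => exact hx
  | tail _ hstep ih =>
    rcases hstep with ⟨rfl, hmem⟩ | ⟨rfl, _⟩
    · have : _ ≠ k := fun h => hk (h ▸ hmem)
      omega
    · omega

theorem P1_iff_forall_lt_mem {n : ℕ} {A : Finset ℕ} : P1 n A ↔ ∀ k < n, k ∈ A := by
  constructor
  · intro h k hk
    by_contra hkA
    have := reflTransGen_stepRel_le_of_notMem hkA h (Nat.zero_le k)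
    omega
  · intro h
    induction n with
    | zero => exact Relation.ReflTransGen.refl
    | succ n ih =>
      exact (ih fun k hk => h k (by omega)).tail (Or.inl ⟨rfl, h n (by omega)⟩)

theorem forall_lt_mem_comp {n m : ℕ} {A B : Finset ℕ} (hA : ∀ i < n, i ∈ A)
    (hB : ∀ j < m, j ∈ B) : ∀ k < n * m, k ∈ comp m A B := by
  intro k hk
  have hm : 0 < m := Nat.pos_of_mul_pos_left (Nat.zero_lt_of_lt hk)
  have hi : k / m < n := (Nat.div_lt_iff_lt_mul hm).2 hk
  have hr : k % m < m := Nat.mod_lt k hm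
  have hk_eq : k / m * m + k % m = k := Nat.div_add_mod' k m
  unfold comp
  by_cases he : Even (k / m)
  · refine Finset.mem_image.2 ⟨(k / m, k % m), Finset.mem_product.2 ⟨hA _ hi, hB _ hr⟩, ?_⟩
    simp only [he, if_true, hk_eq]
  · refine Finset.mem_image.2
      ⟨(k / m, m - 1 - k % m), Finset.mem_product.2 ⟨hA _ hi, hB _ (by omega)⟩, ?_⟩
    simp only [he, if_false]
    omega

theorem P1_stable_comp_general
    (n m : ℕ)
    (A B : Finset ℕ)
    (hA : P1 n A) (hB : P1 m B) :
    P1 (n * m) (comp m A B) :=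
  P1_iff_forall_lt_mem.2 <|
    forall_lt_mem_comp (P1_iff_forall_lt_mem.1 hA) (P1_iff_forall_lt_mem.1 hB)

/-- `P₁` (connectivity of the two solo vertices) is stable under composition:
if `0` and `n` are joined by a path of edges of `A` and `0` and `m` are joined
by a path of edges of `B`, then `0` and `n·m` are joined by a path of edges of
`A⋆B`. -/
theorem P1_stable_comp
    (ℓ ℓ' n m : ℕ) (hℓ : 1 ≤ ℓ) (hℓ' : 1 ≤ ℓ') (hn : n = 3 ^ ℓ) (hm : m = 3 ^ ℓ')
    (A B : Finset ℕ) (hAne : A.Nonempty) (hAlt : ∀ i ∈ A, i < n)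
    (hBne : B.Nonempty) (hBlt : ∀ i ∈ B, i < m)
    (hA : P1 n A) (hB : P1 m B) :
    P1 (n * m) (comp m A B) :=
  P1_stable_comp_general n m A B hA hB
end

section
/- The class-5 canonical model is stronger than all: if A is a 2-process affine task on n = 3^ℓ (ℓ ≥ 1) with class(A) = 5 (i.e., neither {0,1} ∈ A nor {n−1,n} ∈ A and 0 is not connected to n in A), then for every 2-process affine task B on m = 3^{ℓ'} (ℓ' ≥ 1) there exists a chromatic carrier-preserving simplicial map δ from A to the subdivided 1-simplex on {0,…,m} with δ(A) ⊆ B; in particular A* solves every 2-process affine task. -/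
/-- The class-5 canonical model is stronger than all: if `class(A) = 5`
(neither solo vertex belongs to `A` and `0` is not connected to `n` in `A`),
then for every 2-process affine task `B` on `m = 3^ℓ'` there is a chromatic
carrier-preserving simplicial map `δ` from `A` with `δ(A) ⊆ B`; in particular
`A*` solves every 2-process affine task. -/
theorem class5_strongest
    (ℓ n : ℕ) (hℓ : 1 ≤ ℓ) (hn : n = 3 ^ ℓ)
    (A : Finset ℕ) (hAne : A.Nonempty) (hAlt : ∀ i ∈ A, i < n)
    (h5 : classOf n A = 5)
    (ℓ' m : ℕ) (hℓ' : 1 ≤ ℓ') (hm : m = 3 ^ ℓ')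
    (B : Finset ℕ) (hBne : B.Nonempty) (hBlt : ∀ i ∈ B, i < m) :
    (∃ δ : ℕ → ℕ, IsCCMap n m A δ ∧ imageTask A δ ⊆ B) ∧ Solves n m A B := by

  have hnP2 : 0 ∉ A := by
    intro h0
    unfold classOf P2 at h5
    split_ifs at h5 <;> simp_all
  have hnP3 : n - 1 ∉ A := by
    intro h0
    unfold classOf P3 at h5
    split_ifs at h5 <;> simp_all
  obtain ⟨b, hb⟩ := hBne
  have hblt : b < m := hBlt b hb
  set δ : ℕ → ℕ := fun i => if i % 2 = b % 2 then b else b + 1 with hδ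
  have hcc : IsCCMap n m A δ := by
    refine ⟨?_, ?_, ?_, ?_, ?_⟩
    · intro i _; simp only [hδ]; split_ifs <;> omega
    · intro i _; constructor <;> simp only [hδ] <;> split_ifs <;> omega
    · intro i _; simp only [hδ]; split_ifs <;> omega
    · intro h; exact absurd h hnP2
    · intro h; exact absurd h hnP3
  have himg : imageTask A δ ⊆ B := by
    intro j hj
    simp only [imageTask, Finset.mem_image] at hj
    obtain ⟨i, hi, rfl⟩ := hj
    have hmin : min (δ i) (δ (i + 1)) = b := by
      simp only [hδ, Nat.min_def]; split_ifs <;> omega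
    rw [hmin]; exact hb
  refine ⟨⟨δ, hcc, himg⟩, 1, le_refl 1, δ, ?_, ?_⟩
  · simpa [iterTask, pow_one] using hcc
  · simpa [iterTask] using himg
end
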